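/- arXiv:1503.05218 — 2 statements merged into one kernel-verified Lean document; each statement's English description precedes it below -/
import Mathlib

section
/- (Taylor expansion, right version.) Let ζ₀ ∈ E₃, ξ₁₀ = f₁(ζ₀), ξ₂₀ = f₂(ζ₀), and R > 0. Let F₁, F₃ be holomorphic on the disk U(ξ₁₀, R) = {ξ ∈ ℂ : |ξ − ξ₁₀| < R} and F₂, F₄ holomorphic on U(ξ₂₀, R), and define Φ on B(ζ₀, R) = {ζ ∈ E₃ : |f₁(ζ) − ξ₁₀| < R, |f₂(ζ) − ξ₂₀| < R} by Φ(ζ) = F₁(ξ₁)e₁ + F₂(ξ₂)e₂ + F₃(ξ₁)e₃ + F₄(ξ₂)e₄ with ξ₁ = f₁(ζ), ξ₂ = f₂(ζ). Then for every ζ ∈ B(ζ₀, R) the power series ∑_{n=0}^∞ (ζ − ζ₀)ⁿ pₙ, with pₙ = aₙe₁ + bₙe₂ + cₙe₃ + dₙe₄ where aₙ = F₁⁽ⁿ⁾(ξ₁₀)/n!, bₙ = F₂⁽ⁿ⁾(ξ₂₀)/n!, cₙ = F₃⁽ⁿ⁾(ξ₁₀)/n!, dₙ = F₄⁽ⁿ⁾(ξ₂₀)/n!,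 converges absolutely in the norm of ℍ(ℂ) and its sum equals Φ(ζ). -/
noncomputable section

/-- The algebra of complex quaternions ℍ(ℂ): quaternions over ℂ with
I² = J² = K² = -1, IJ = -JI = K, JK = -KJ = I, KI = -IK = J. -/
abbrev HC : Type := Quaternion ℂ

/-- The quaternion unit I. -/
def Iq : HC := ⟨0, 1, 0, 0⟩
/-- The quaternion unit J. -/
def Jq : HC := ⟨0, 0, 1, 0⟩
/-- The quaternion unit K. -/
def Kq : HC := ⟨0, 0, 0, 1⟩

/-- e₁ = (1 + iI)/2. -/
def e1 : HC := (2 : ℂ)⁻¹ • (1 + Complex.I • Iq)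
/-- e₂ = (1 - iI)/2. -/
def e2 : HC := (2 : ℂ)⁻¹ • (1 - Complex.I • Iq)
/-- e₃ = (iJ - K)/2. -/
def e3 : HC := (2 : ℂ)⁻¹ • (Complex.I • Jq - Kq)
/-- e₄ = (iJ + K)/2. -/
def e4 : HC := (2 : ℂ)⁻¹ • (Complex.I • Jq + Kq)

/-- The coefficient c₁ of q in the basis {e₁,e₂,e₃,e₄} (q = c₁e₁ + c₂e₂ + c₃e₃ + c₄e₄). -/
def coord1 (q : HC) : ℂ := q.re - Complex.I * q.imI
/-- The coefficient c₂ of q in the basis {e₁,e₂,e₃,e₄}. -/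
def coord2 (q : HC) : ℂ := q.re + Complex.I * q.imI
/-- The coefficient c₃ of q in the basis {e₁,e₂,e₃,e₄}. -/
def coord3 (q : HC) : ℂ := -(Complex.I * q.imJ) - q.imK
/-- The coefficient c₄ of q in the basis {e₁,e₂,e₃,e₄}. -/
def coord4 (q : HC) : ℂ := -(Complex.I * q.imJ) + q.imK

/-- The norm ‖c‖ = √(|c₁|² + |c₂|² + |c₃|² + |c₄|²) of c = c₁e₁ + c₂e₂ + c₃e₃ + c₄e₄. -/
def hnorm (q : HC) : ℝ :=
  Real.sqrt (‖coord1 q‖ ^ 2 + ‖coord2 q‖ ^ 2 +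
    ‖coord3 q‖ ^ 2 + ‖coord4 q‖ ^ 2)

/-- i₂ = a₁e₁ + a₂e₂. -/
def i2 (a₁ a₂ : ℂ) : HC := a₁ • e1 + a₂ • e2
/-- i₃ = b₁e₁ + b₂e₂. -/
def i3 (b₁ b₂ : ℂ) : HC := b₁ • e1 + b₂ • e2

/-- ζ = x·i₁ + y·i₂ + z·i₃ with i₁ = 1. -/
def zeta (a₁ a₂ b₁ b₂ : ℂ) (x y z : ℝ) : HC :=
  (x : ℂ) • (1 : HC) + (y : ℂ) • i2 a₁ a₂ + (z : ℂ) • i3 b₁ b₂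

/-- E₃ = {x i₁ + y i₂ + z i₃ : x, y, z ∈ ℝ}. -/
def E3 (a₁ a₂ b₁ b₂ : ℂ) : Set HC :=
  {q | ∃ x y z : ℝ, q = zeta a₁ a₂ b₁ b₂ x y z}

/-- ξ₁ = f₁(ζ) = x + y a₁ + z b₁. -/
def xi1 (a₁ b₁ : ℂ) (x y z : ℝ) : ℂ := (x : ℂ) + (y : ℂ) * a₁ + (z : ℂ) * b₁
/-- ξ₂ = f₂(ζ) = x + y a₂ + z b₂. -/
def xi2 (a₂ b₂ : ℂ) (x y z : ℝ) : ℂ := (x : ℂ) + (y : ℂ) * a₂ + (z : ℂ) * b₂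

/-- A series ∑ f n converges (partial sums) to s in the norm of ℍ(ℂ). -/
def SeriesTendsto (f : ℕ → HC) (s : HC) : Prop :=
  Filter.Tendsto (fun N : ℕ => hnorm ((∑ n ∈ Finset.range N, f n) - s))
    Filter.atTop (nhds 0)

/-! In the basis e₁, e₂, e₃, e₄ the elements of E₃ are the diagonal elements ξ₁e₁ + ξ₂e₂
(e₁, e₂ are orthogonal idempotents with e₁ + e₂ = 1), and left multiplication by ξ₁e₁ + ξ₂e₂
scales the coordinates of any element by ξ₁, ξ₂, ξ₁, ξ₂. Hence (ζ - ζ₀)ⁿ pₙ has coordinates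
uⁿaₙ, vⁿbₙ, uⁿcₙ, vⁿdₙ with u = ξ₁ - ξ₁₀, v = ξ₂ - ξ₂₀, and the series splits into the four
complex Taylor series of F₁, F₂, F₃, F₄, which converge absolutely in their discs. Since the
norm of ℍ(ℂ) is the Euclidean norm of the coordinates, absolute convergence and convergence of
the partial sums transfer to ℍ(ℂ). -/

open Filter Topology Nat
open scoped Quaternion

def ofCoords (c₁ c₂ c₃ c₄ : ℂ) : HC := c₁ • e1 + c₂ • e2 + c₃ • e3 + c₄ • e4

@[simp] lemma Iq_components : Iq.re = 0 ∧ Iq.imI = 1 ∧ Iq.imJ = 0 ∧ Iq.imK = 0 :=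
  ⟨rfl, rfl, rfl, rfl⟩
@[simp] lemma Jq_components : Jq.re = 0 ∧ Jq.imI = 0 ∧ Jq.imJ = 1 ∧ Jq.imK = 0 :=
  ⟨rfl, rfl, rfl, rfl⟩
@[simp] lemma Kq_components : Kq.re = 0 ∧ Kq.imI = 0 ∧ Kq.imJ = 0 ∧ Kq.imK = 1 :=
  ⟨rfl, rfl, rfl, rfl⟩

section Coordinates

variable (c₁ c₂ c₃ c₄ : ℂ)

@[simp] lemma re_ofCoords : (ofCoords c₁ c₂ c₃ c₄).re = (c₁ + c₂) / 2 := by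
  simp [ofCoords, e1, e2, e3, e4, Quaternion.re_smul]; ring

@[simp] lemma imI_ofCoords : (ofCoords c₁ c₂ c₃ c₄).imI = Complex.I * (c₁ - c₂) / 2 := by
  simp [ofCoords, e1, e2, e3, e4, Quaternion.imI_smul]; ring

@[simp] lemma imJ_ofCoords : (ofCoords c₁ c₂ c₃ c₄).imJ = Complex.I * (c₃ + c₄) / 2 := by
  simp [ofCoords, e1, e2, e3, e4, Quaternion.imJ_smul]; ring

@[simp] lemma imK_ofCoords : (ofCoords c₁ c₂ c₃ c₄).imK = (c₄ - c₃) / 2 := by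
  simp [ofCoords, e1, e2, e3, e4, Quaternion.imK_smul]; ring

lemma hnorm_ofCoords :
    hnorm (ofCoords c₁ c₂ c₃ c₄) = √(‖c₁‖ ^ 2 + ‖c₂‖ ^ 2 + ‖c₃‖ ^ 2 + ‖c₄‖ ^ 2) := by
  have h₁ : coord1 (ofCoords c₁ c₂ c₃ c₄) = c₁ := by
    simp only [coord1, re_ofCoords, imI_ofCoords]
    linear_combination (c₂ - c₁) / 2 * Complex.I_sq
  have h₂ : coord2 (ofCoords c₁ c₂ c₃ c₄) = c₂ := by
    simp only [coord2, re_ofCoords, imI_ofCoords]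
    linear_combination (c₁ - c₂) / 2 * Complex.I_sq
  have h₃ : coord3 (ofCoords c₁ c₂ c₃ c₄) = c₃ := by
    simp only [coord3, imJ_ofCoords, imK_ofCoords]
    linear_combination -(c₃ + c₄) / 2 * Complex.I_sq
  have h₄ : coord4 (ofCoords c₁ c₂ c₃ c₄) = c₄ := by
    simp only [coord4, imJ_ofCoords, imK_ofCoords]
    linear_combination -(c₃ + c₄) / 2 * Complex.I_sq
  rw [hnorm, h₁, h₂, h₃, h₄]

lemma hnorm_ofCoords_le : hnorm (ofCoords c₁ c₂ c₃ c₄) ≤ ‖c₁‖ + ‖c₂‖ + ‖c₃‖ + ‖c₄‖ := by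
  rw [hnorm_ofCoords, Real.sqrt_le_iff]
  constructor
  · positivity
  · nlinarith [norm_nonneg c₁, norm_nonneg c₂, norm_nonneg c₃, norm_nonneg c₄]

lemma ofCoords_diag_mul (u v : ℂ) :
    ofCoords u v 0 0 * ofCoords c₁ c₂ c₃ c₄ = ofCoords (u * c₁) (v * c₂) (u * c₃) (v * c₄) := by
  apply Quaternion.ext <;>
    simp [Quaternion.re_mul, Quaternion.imI_mul, Quaternion.imJ_mul, Quaternion.imK_mul] <;>
    ring_nf <;> simp <;> ring

end Coordinates

lemma one_eq_ofCoords : (1 : HC) = ofCoords 1 1 0 0 := by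
  apply Quaternion.ext <;> simp

lemma ofCoords_diag_pow (u v : ℂ) (n : ℕ) : ofCoords u v 0 0 ^ n = ofCoords (u ^ n) (v ^ n) 0 0 := by
  induction n with
  | zero => simp [one_eq_ofCoords]
  | succ n ih => rw [pow_succ, ih, ofCoords_diag_mul, pow_succ, pow_succ, mul_zero, mul_zero]

lemma ofCoords_diag_pow_mul (u v c₁ c₂ c₃ c₄ : ℂ) (n : ℕ) :
    ofCoords u v 0 0 ^ n * ofCoords c₁ c₂ c₃ c₄ =
      ofCoords (u ^ n * c₁) (v ^ n * c₂) (u ^ n * c₃) (v ^ n * c₄) := by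
  rw [ofCoords_diag_pow, ofCoords_diag_mul]

lemma ofCoords_sub (c₁ c₂ c₃ c₄ d₁ d₂ d₃ d₄ : ℂ) :
    ofCoords c₁ c₂ c₃ c₄ - ofCoords d₁ d₂ d₃ d₄ = ofCoords (c₁ - d₁) (c₂ - d₂) (c₃ - d₃) (c₄ - d₄) := by
  simp only [ofCoords]; module

lemma sum_ofCoords {ι : Type*} (s : Finset ι) (c₁ c₂ c₃ c₄ : ι → ℂ) :
    ∑ i ∈ s, ofCoords (c₁ i) (c₂ i) (c₃ i) (c₄ i) =
      ofCoords (∑ i ∈ s, c₁ i) (∑ i ∈ s, c₂ i) (∑ i ∈ s, c₃ i) (∑ i ∈ s, c₄ i) := by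
  simp only [ofCoords, Finset.sum_add_distrib, ← Finset.sum_smul]

lemma zeta_eq_ofCoords (a₁ a₂ b₁ b₂ : ℂ) (x y z : ℝ) :
    zeta a₁ a₂ b₁ b₂ x y z = ofCoords (xi1 a₁ b₁ x y z) (xi2 a₂ b₂ x y z) 0 0 := by
  rw [zeta, one_eq_ofCoords]
  simp only [i2, i3, ofCoords, xi1, xi2]
  module

lemma tendsto_hnorm_ofCoords {ι : Type*} {l : Filter ι} {c₁ c₂ c₃ c₄ : ι → ℂ}
    (h₁ : Tendsto c₁ l (𝓝 0)) (h₂ : Tendsto c₂ l (𝓝 0)) (h₃ : Tendsto c₃ l (𝓝 0))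
    (h₄ : Tendsto c₄ l (𝓝 0)) :
    Tendsto (fun i => hnorm (ofCoords (c₁ i) (c₂ i) (c₃ i) (c₄ i))) l (𝓝 0) :=
  squeeze_zero (fun _ => Real.sqrt_nonneg _) (fun _ => hnorm_ofCoords_le _ _ _ _)
    (by simpa using ((h₁.norm.add h₂.norm).add h₃.norm).add h₄.norm)

lemma summable_hnorm_ofCoords {ι : Type*} {c₁ c₂ c₃ c₄ : ι → ℂ}
    (h₁ : Summable c₁) (h₂ : Summable c₂) (h₃ : Summable c₃) (h₄ : Summable c₄) :
    Summable fun i => hnorm (ofCoords (c₁ i) (c₂ i) (c₃ i) (c₄ i)) :=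
  .of_nonneg_of_le (fun _ => Real.sqrt_nonneg _) (fun _ => hnorm_ofCoords_le _ _ _ _)
    (((h₁.norm.add h₂.norm).add h₃.norm).add h₄.norm)

lemma seriesTendsto_ofCoords {c₁ c₂ c₃ c₄ : ℕ → ℂ} {s₁ s₂ s₃ s₄ : ℂ}
    (h₁ : HasSum c₁ s₁) (h₂ : HasSum c₂ s₂) (h₃ : HasSum c₃ s₃) (h₄ : HasSum c₄ s₄) :
    SeriesTendsto (fun n => ofCoords (c₁ n) (c₂ n) (c₃ n) (c₄ n)) (ofCoords s₁ s₂ s₃ s₄) := by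
  simp only [SeriesTendsto, sum_ofCoords, ofCoords_sub]
  exact tendsto_hnorm_ofCoords (tendsto_sub_nhds_zero_iff.mpr h₁.tendsto_sum_nat)
    (tendsto_sub_nhds_zero_iff.mpr h₂.tendsto_sum_nat)
    (tendsto_sub_nhds_zero_iff.mpr h₃.tendsto_sum_nat)
    (tendsto_sub_nhds_zero_iff.mpr h₄.tendsto_sum_nat)

lemma hasSum_taylorSeries_of_norm_sub_lt {F : ℂ → ℂ} {c z : ℂ} {R : ℝ}
    (hF : DifferentiableOn ℂ F (Metric.ball c R)) (hz : ‖z - c‖ < R) :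
    HasSum (fun n => (z - c) ^ n * (iteratedDeriv n F c / n !)) (F z) := by
  refine (Complex.hasSum_taylorSeries_on_ball hF (mem_ball_iff_norm.mpr hz)).congr_fun fun n => ?_
  simp only [smul_eq_mul]
  ring

theorem taylor_right_general (a₁ a₂ b₁ b₂ : ℂ) (x₀ y₀ z₀ : ℝ) (R : ℝ)
    (F₁ F₂ F₃ F₄ : ℂ → ℂ)
    (hF₁ : DifferentiableOn ℂ F₁ (Metric.ball (xi1 a₁ b₁ x₀ y₀ z₀) R))
    (hF₃ : DifferentiableOn ℂ F₃ (Metric.ball (xi1 a₁ b₁ x₀ y₀ z₀) R))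
    (hF₂ : DifferentiableOn ℂ F₂ (Metric.ball (xi2 a₂ b₂ x₀ y₀ z₀) R))
    (hF₄ : DifferentiableOn ℂ F₄ (Metric.ball (xi2 a₂ b₂ x₀ y₀ z₀) R))
    (x y z : ℝ)
    (h₁ : ‖xi1 a₁ b₁ x y z - xi1 a₁ b₁ x₀ y₀ z₀‖ < R)
    (h₂ : ‖xi2 a₂ b₂ x y z - xi2 a₂ b₂ x₀ y₀ z₀‖ < R) :
    Summable (fun n : ℕ =>
      hnorm ((zeta a₁ a₂ b₁ b₂ x y z - zeta a₁ a₂ b₁ b₂ x₀ y₀ z₀) ^ n *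
        ((iteratedDeriv n F₁ (xi1 a₁ b₁ x₀ y₀ z₀) / (Nat.factorial n : ℂ)) • e1 +
         (iteratedDeriv n F₂ (xi2 a₂ b₂ x₀ y₀ z₀) / (Nat.factorial n : ℂ)) • e2 +
         (iteratedDeriv n F₃ (xi1 a₁ b₁ x₀ y₀ z₀) / (Nat.factorial n : ℂ)) • e3 +
         (iteratedDeriv n F₄ (xi2 a₂ b₂ x₀ y₀ z₀) / (Nat.factorial n : ℂ)) • e4))) ∧
    SeriesTendsto (fun n : ℕ =>
      (zeta a₁ a₂ b₁ b₂ x y z - zeta a₁ a₂ b₁ b₂ x₀ y₀ z₀) ^ n *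
        ((iteratedDeriv n F₁ (xi1 a₁ b₁ x₀ y₀ z₀) / (Nat.factorial n : ℂ)) • e1 +
         (iteratedDeriv n F₂ (xi2 a₂ b₂ x₀ y₀ z₀) / (Nat.factorial n : ℂ)) • e2 +
         (iteratedDeriv n F₃ (xi1 a₁ b₁ x₀ y₀ z₀) / (Nat.factorial n : ℂ)) • e3 +
         (iteratedDeriv n F₄ (xi2 a₂ b₂ x₀ y₀ z₀) / (Nat.factorial n : ℂ)) • e4))
      (F₁ (xi1 a₁ b₁ x y z) • e1 + F₂ (xi2 a₂ b₂ x y z) • e2 +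
       F₃ (xi1 a₁ b₁ x y z) • e3 + F₄ (xi2 a₂ b₂ x y z) • e4) := by
  have hζ : ofCoords (xi1 a₁ b₁ x y z - xi1 a₁ b₁ x₀ y₀ z₀)
      (xi2 a₂ b₂ x y z - xi2 a₂ b₂ x₀ y₀ z₀) 0 0 =
      zeta a₁ a₂ b₁ b₂ x y z - zeta a₁ a₂ b₁ b₂ x₀ y₀ z₀ := by
    rw [zeta_eq_ofCoords, zeta_eq_ofCoords, ofCoords_sub, sub_self]
  have T₁ := hasSum_taylorSeries_of_norm_sub_lt hF₁ h₁
  have T₂ := hasSum_taylorSeries_of_norm_sub_lt hF₂ h₂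
  have T₃ := hasSum_taylorSeries_of_norm_sub_lt hF₃ h₁
  have T₄ := hasSum_taylorSeries_of_norm_sub_lt hF₄ h₂
  have key := And.intro
    (summable_hnorm_ofCoords T₁.summable T₂.summable T₃.summable T₄.summable)
    (seriesTendsto_ofCoords T₁ T₂ T₃ T₄)
  simp only [← ofCoords_diag_pow_mul, hζ] at key
  exact key

/-- Taylor expansion, right version: if F₁, F₃ are holomorphic on
U(ξ₁₀,R) and F₂, F₄ on U(ξ₂₀,R), and Φ(ζ) = F₁(ξ₁)e₁ + F₂(ξ₂)e₂ + F₃(ξ₁)e₃ + F₄(ξ₂)e₄,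
then for every ζ ∈ B(ζ₀,R) the series ∑ₙ (ζ-ζ₀)ⁿpₙ with pₙ = aₙe₁ + bₙe₂ + cₙe₃ + dₙe₄,
aₙ = F₁⁽ⁿ⁾(ξ₁₀)/n!, bₙ = F₂⁽ⁿ⁾(ξ₂₀)/n!, cₙ = F₃⁽ⁿ⁾(ξ₁₀)/n!, dₙ = F₄⁽ⁿ⁾(ξ₂₀)/n!,
converges absolutely in the norm of ℍ(ℂ) and its sum is Φ(ζ). -/
theorem taylor_right (a₁ a₂ b₁ b₂ : ℂ) (x₀ y₀ z₀ : ℝ) (R : ℝ) (hR : 0 < R)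
    (F₁ F₂ F₃ F₄ : ℂ → ℂ)
    (hF₁ : DifferentiableOn ℂ F₁ (Metric.ball (xi1 a₁ b₁ x₀ y₀ z₀) R))
    (hF₃ : DifferentiableOn ℂ F₃ (Metric.ball (xi1 a₁ b₁ x₀ y₀ z₀) R))
    (hF₂ : DifferentiableOn ℂ F₂ (Metric.ball (xi2 a₂ b₂ x₀ y₀ z₀) R))
    (hF₄ : DifferentiableOn ℂ F₄ (Metric.ball (xi2 a₂ b₂ x₀ y₀ z₀) R))
    (x y z : ℝ)
    (h₁ : ‖xi1 a₁ b₁ x y z - xi1 a₁ b₁ x₀ y₀ z₀‖ < R)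
    (h₂ : ‖xi2 a₂ b₂ x y z - xi2 a₂ b₂ x₀ y₀ z₀‖ < R) :
    Summable (fun n : ℕ =>
      hnorm ((zeta a₁ a₂ b₁ b₂ x y z - zeta a₁ a₂ b₁ b₂ x₀ y₀ z₀) ^ n *
        ((iteratedDeriv n F₁ (xi1 a₁ b₁ x₀ y₀ z₀) / (Nat.factorial n : ℂ)) • e1 +
         (iteratedDeriv n F₂ (xi2 a₂ b₂ x₀ y₀ z₀) / (Nat.factorial n : ℂ)) • e2 +
         (iteratedDeriv n F₃ (xi1 a₁ b₁ x₀ y₀ z₀) / (Nat.factorial n : ℂ)) • e3 +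
         (iteratedDeriv n F₄ (xi2 a₂ b₂ x₀ y₀ z₀) / (Nat.factorial n : ℂ)) • e4))) ∧
    SeriesTendsto (fun n : ℕ =>
      (zeta a₁ a₂ b₁ b₂ x y z - zeta a₁ a₂ b₁ b₂ x₀ y₀ z₀) ^ n *
        ((iteratedDeriv n F₁ (xi1 a₁ b₁ x₀ y₀ z₀) / (Nat.factorial n : ℂ)) • e1 +
         (iteratedDeriv n F₂ (xi2 a₂ b₂ x₀ y₀ z₀) / (Nat.factorial n : ℂ)) • e2 +
         (iteratedDeriv n F₃ (xi1 a₁ b₁ x₀ y₀ z₀) / (Nat.factorial n : ℂ)) • e3 +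
         (iteratedDeriv n F₄ (xi2 a₂ b₂ x₀ y₀ z₀) / (Nat.factorial n : ℂ)) • e4))
      (F₁ (xi1 a₁ b₁ x y z) • e1 + F₂ (xi2 a₂ b₂ x y z) • e2 +
       F₃ (xi1 a₁ b₁ x y z) • e3 + F₄ (xi2 a₂ b₂ x y z) • e4) :=
  taylor_right_general a₁ a₂ b₁ b₂ x₀ y₀ z₀ R F₁ F₂ F₃ F₄ hF₁ hF₃ hF₂ hF₄ x y z h₁ h₂
end
end

section
/- (Taylor expansion, left version.) Let ζ₀ ∈ E₃, ξ₁₀ = f₁(ζ₀), ξ₂₀ = f₂(ζ₀), and R > 0. Let F̂₁, F̂₄ be holomorphic on the disk U(ξ₁₀, R) = {ξ ∈ ℂ : |ξ − ξ₁₀| < R} and F̂₂, F̂₃ holomorphic on U(ξ₂₀, R), and define Φ̂ on B(ζ₀, R) = {ζ ∈ E₃ : |f₁(ζ) − ξ₁₀| < R, |f₂(ζ) − ξ₂₀| < R} by Φ̂(ζ) = F̂₁(ξ₁)e₁ + F̂₂(ξ₂)e₂ + F̂₃(ξ₂)e₃ + F̂₄(ξ₁)e₄ with ξ₁ = f₁(ζ),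 ξ₂ = f₂(ζ). Then for every ζ ∈ B(ζ₀, R) the power series ∑_{n=0}^∞ p̂ₙ (ζ − ζ₀)ⁿ, with p̂ₙ = âₙe₁ + b̂ₙe₂ + ĉₙe₃ + d̂ₙe₄ where âₙ = F̂₁⁽ⁿ⁾(ξ₁₀)/n!, b̂ₙ = F̂₂⁽ⁿ⁾(ξ₂₀)/n!, ĉₙ = F̂₃⁽ⁿ⁾(ξ₂₀)/n!, d̂ₙ = F̂₄⁽ⁿ⁾(ξ₁₀)/n!, converges absolutely in the norm of ℍ(ℂ) and its sum equals Φ̂(ζ). -/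
noncomputable section

/-! In the idempotent basis the increment is `ζ - ζ₀ = (ξ₁ - ξ₁₀) e₁ + (ξ₂ - ξ₂₀) e₂`, and right
multiplication by `w₁ e₁ + w₂ e₂` multiplies the four coordinates by `w₁, w₂, w₂, w₁`. So the
`n`-th term of the series has coordinates `âₙ (ξ₁ - ξ₁₀)ⁿ, b̂ₙ (ξ₂ - ξ₂₀)ⁿ, ĉₙ (ξ₂ - ξ₂₀)ⁿ,
d̂ₙ (ξ₁ - ξ₁₀)ⁿ`, the terms of four one-variable Taylor series. The norm of `ℍ(ℂ)` is at most the
sum of the moduli of the coordinates, so convergence and absolute convergence reduce to the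
Cauchy–Taylor theorem for `F̂₁, …, F̂₄` and Abel's lemma. -/

open Complex
open scoped ENNReal Nat

lemma combo_eq_mk (c₁ c₂ c₃ c₄ : ℂ) :
    c₁ • e1 + c₂ • e2 + c₃ • e3 + c₄ • e4 =
      ⟨(c₁ + c₂) / 2, I * (c₁ - c₂) / 2, I * (c₃ + c₄) / 2, (c₄ - c₃) / 2⟩ := by
  -- `Iq, Jq, Kq` are unfolded last: the projection lemmas do not fire on a raw structure literal.
  ext <;> simp only [e1, e2, e3, e4, smul_add, smul_sub, smul_eq_mul, Quaternion.re_add,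
    Quaternion.re_sub, Quaternion.re_smul, Quaternion.re_one, Quaternion.imI_add,
    Quaternion.imI_sub, Quaternion.imI_smul, Quaternion.imI_one, Quaternion.imJ_add,
    Quaternion.imJ_sub, Quaternion.imJ_smul, Quaternion.imJ_one, Quaternion.imK_add,
    Quaternion.imK_sub, Quaternion.imK_smul, Quaternion.imK_one] <;>
    simp only [Iq, Jq, Kq] <;> ring

lemma coord1_combo (c₁ c₂ c₃ c₄ : ℂ) : coord1 (c₁ • e1 + c₂ • e2 + c₃ • e3 + c₄ • e4) = c₁ := by
  simp only [coord1, combo_eq_mk]; linear_combination (c₂ - c₁) / 2 * I_sq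

lemma coord2_combo (c₁ c₂ c₃ c₄ : ℂ) : coord2 (c₁ • e1 + c₂ • e2 + c₃ • e3 + c₄ • e4) = c₂ := by
  simp only [coord2, combo_eq_mk]; linear_combination (c₁ - c₂) / 2 * I_sq

lemma coord3_combo (c₁ c₂ c₃ c₄ : ℂ) : coord3 (c₁ • e1 + c₂ • e2 + c₃ • e3 + c₄ • e4) = c₃ := by
  simp only [coord3, combo_eq_mk]; linear_combination -(c₃ + c₄) / 2 * I_sq

lemma coord4_combo (c₁ c₂ c₃ c₄ : ℂ) : coord4 (c₁ • e1 + c₂ • e2 + c₃ • e3 + c₄ • e4) = c₄ := by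
  simp only [coord4, combo_eq_mk]; linear_combination -(c₃ + c₄) / 2 * I_sq

lemma hnorm_combo_le (c₁ c₂ c₃ c₄ : ℂ) :
    hnorm (c₁ • e1 + c₂ • e2 + c₃ • e3 + c₄ • e4) ≤ ‖c₁‖ + ‖c₂‖ + ‖c₃‖ + ‖c₄‖ := by
  rw [hnorm, coord1_combo, coord2_combo, coord3_combo, coord4_combo, Real.sqrt_le_left]
  · nlinarith [norm_nonneg c₁, norm_nonneg c₂, norm_nonneg c₃, norm_nonneg c₄]
  · positivity

lemma combo_mul (c₁ c₂ c₃ c₄ w₁ w₂ : ℂ) :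
    (c₁ • e1 + c₂ • e2 + c₃ • e3 + c₄ • e4) * (w₁ • e1 + w₂ • e2) =
      (c₁ * w₁) • e1 + (c₂ * w₂) • e2 + (c₃ * w₂) • e3 + (c₄ * w₁) • e4 := by
  ext <;> simp only [e1, e2, e3, e4, smul_add, smul_sub, smul_eq_mul, Quaternion.re_add,
    Quaternion.re_sub, Quaternion.re_smul, Quaternion.re_one, Quaternion.imI_add,
    Quaternion.imI_sub, Quaternion.imI_smul, Quaternion.imI_one, Quaternion.imJ_add,
    Quaternion.imJ_sub, Quaternion.imJ_smul, Quaternion.imJ_one, Quaternion.imK_add,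
    Quaternion.imK_sub, Quaternion.imK_smul, Quaternion.imK_one, Quaternion.re_mul,
    Quaternion.imI_mul, Quaternion.imJ_mul, Quaternion.imK_mul] <;>
    simp only [Iq, Jq, Kq] <;> ring_nf <;> simp only [I_sq] <;> ring

lemma combo_mul_pow (c₁ c₂ c₃ c₄ w₁ w₂ : ℂ) (n : ℕ) :
    (c₁ • e1 + c₂ • e2 + c₃ • e3 + c₄ • e4) * (w₁ • e1 + w₂ • e2) ^ n =
      (c₁ * w₁ ^ n) • e1 + (c₂ * w₂ ^ n) • e2 + (c₃ * w₂ ^ n) • e3 + (c₄ * w₁ ^ n) • e4 := by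
  induction n with
  | zero => simp
  | succ n ih => simp only [pow_succ, ← mul_assoc, ih, combo_mul]

lemma e1_add_e2 : e1 + e2 = 1 := by
  rw [e1, e2]
  module

lemma zeta_eq (a₁ a₂ b₁ b₂ : ℂ) (x y z : ℝ) :
    zeta a₁ a₂ b₁ b₂ x y z = xi1 a₁ b₁ x y z • e1 + xi2 a₂ b₂ x y z • e2 := by
  rw [zeta, i2, i3, xi1, xi2, ← e1_add_e2]
  module

lemma zeta_sub_zeta (a₁ a₂ b₁ b₂ : ℂ) (x y z x₀ y₀ z₀ : ℝ) :
    zeta a₁ a₂ b₁ b₂ x y z - zeta a₁ a₂ b₁ b₂ x₀ y₀ z₀ =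
      (xi1 a₁ b₁ x y z - xi1 a₁ b₁ x₀ y₀ z₀) • e1 +
      (xi2 a₂ b₂ x y z - xi2 a₂ b₂ x₀ y₀ z₀) • e2 := by
  rw [zeta_eq, zeta_eq]
  module

lemma summable_hnorm_combo {f₁ f₂ f₃ f₄ : ℕ → ℂ} (h₁ : Summable fun n => ‖f₁ n‖)
    (h₂ : Summable fun n => ‖f₂ n‖) (h₃ : Summable fun n => ‖f₃ n‖)
    (h₄ : Summable fun n => ‖f₄ n‖) :
    Summable fun n => hnorm (f₁ n • e1 + f₂ n • e2 + f₃ n • e3 + f₄ n • e4) :=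
  .of_nonneg_of_le (fun _ => Real.sqrt_nonneg _) (fun _ => hnorm_combo_le _ _ _ _)
    (((h₁.add h₂).add h₃).add h₄)

lemma seriesTendsto_combo {f₁ f₂ f₃ f₄ : ℕ → ℂ} {s₁ s₂ s₃ s₄ : ℂ} (h₁ : HasSum f₁ s₁)
    (h₂ : HasSum f₂ s₂) (h₃ : HasSum f₃ s₃) (h₄ : HasSum f₄ s₄) :
    SeriesTendsto (fun n => f₁ n • e1 + f₂ n • e2 + f₃ n • e3 + f₄ n • e4)
      (s₁ • e1 + s₂ • e2 + s₃ • e3 + s₄ • e4) := by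
  have hsub : ∀ {f : ℕ → ℂ} {s : ℂ}, HasSum f s →
      Filter.Tendsto (fun N => ‖(∑ n ∈ Finset.range N, f n) - s‖) Filter.atTop (nhds 0) :=
    fun {_ s} h => by simpa using (h.tendsto_sum_nat.sub_const s).norm
  have hpartial : ∀ N, (∑ n ∈ Finset.range N, (f₁ n • e1 + f₂ n • e2 + f₃ n • e3 + f₄ n • e4)) -
      (s₁ • e1 + s₂ • e2 + s₃ • e3 + s₄ • e4) =
      ((∑ n ∈ Finset.range N, f₁ n) - s₁) • e1 + ((∑ n ∈ Finset.range N, f₂ n) - s₂) • e2 +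
        ((∑ n ∈ Finset.range N, f₃ n) - s₃) • e3 + ((∑ n ∈ Finset.range N, f₄ n) - s₄) • e4 := by
    intro N
    simp only [Finset.sum_add_distrib, ← Finset.sum_smul]
    module
  refine squeeze_zero (fun _ => Real.sqrt_nonneg _) (fun N => ?_)
    (by simpa using (((hsub h₁).add (hsub h₂)).add (hsub h₃)).add (hsub h₄))
  rw [hpartial]
  exact hnorm_combo_le _ _ _ _

lemma summable_norm_mul_pow_of_summable {𝕜 : Type*} [NontriviallyNormedField 𝕜] {a : ℕ → 𝕜}
    {w x : 𝕜} (h : Summable fun n => a n * w ^ n) (hx : ‖x‖ < ‖w‖) :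
    Summable fun n => ‖a n‖ * ‖x‖ ^ n := by
  let p := FormalMultilinearSeries.ofScalars 𝕜 a
  have hp : ∀ n, ‖p n‖ = ‖a n‖ := fun n => FormalMultilinearSeries.ofScalars_norm 𝕜 a n
  have hw : (‖w‖₊ : ℝ≥0∞) ≤ p.radius :=
    p.le_radius_of_tendsto (l := 0) (by simpa [hp] using h.tendsto_atTop_zero.norm)
  have hx' : (‖x‖₊ : ℝ≥0∞) < p.radius := lt_of_lt_of_le (by exact_mod_cast hx) hw
  simpa [hp] using p.summable_norm_mul_pow hx'

lemma hasSum_taylor_on_ball {f : ℂ → ℂ} {c z : ℂ} {r : ℝ}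
    (hf : DifferentiableOn ℂ f (Metric.ball c r)) (hz : ‖z - c‖ < r) :
    HasSum (fun n => iteratedDeriv n f c / (n ! : ℂ) * (z - c) ^ n) (f z) := by
  have hterm : (fun n => iteratedDeriv n f c / (n ! : ℂ) * (z - c) ^ n) =
      fun n => (n ! : ℂ)⁻¹ • (z - c) ^ n • iteratedDeriv n f c := by
    ext n
    simp only [smul_eq_mul]
    ring
  rw [hterm]
  exact Complex.hasSum_taylorSeries_on_ball hf (mem_ball_iff_norm.mpr hz)

lemma summable_norm_taylor_on_ball {f : ℂ → ℂ} {c z : ℂ} {r : ℝ}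
    (hf : DifferentiableOn ℂ f (Metric.ball c r)) (hz : ‖z - c‖ < r) :
    Summable fun n => ‖iteratedDeriv n f c / (n ! : ℂ)‖ * ‖z - c‖ ^ n := by
  obtain ⟨ρ, hzρ, hρr⟩ := exists_between hz
  have hρ : ‖c + ρ - c‖ = ρ := by simp [abs_of_pos ((norm_nonneg _).trans_lt hzρ)]
  exact summable_norm_mul_pow_of_summable
    (hasSum_taylor_on_ball hf (hρ.trans_lt hρr)).summable (by rwa [hρ])

theorem taylor_left_general (a₁ a₂ b₁ b₂ : ℂ) (x₀ y₀ z₀ : ℝ) (R : ℝ)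
    (F₁ F₂ F₃ F₄ : ℂ → ℂ)
    (hF₁ : DifferentiableOn ℂ F₁ (Metric.ball (xi1 a₁ b₁ x₀ y₀ z₀) R))
    (hF₄ : DifferentiableOn ℂ F₄ (Metric.ball (xi1 a₁ b₁ x₀ y₀ z₀) R))
    (hF₂ : DifferentiableOn ℂ F₂ (Metric.ball (xi2 a₂ b₂ x₀ y₀ z₀) R))
    (hF₃ : DifferentiableOn ℂ F₃ (Metric.ball (xi2 a₂ b₂ x₀ y₀ z₀) R))
    (x y z : ℝ)
    (h₁ : ‖xi1 a₁ b₁ x y z - xi1 a₁ b₁ x₀ y₀ z₀‖ < R)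
    (h₂ : ‖xi2 a₂ b₂ x y z - xi2 a₂ b₂ x₀ y₀ z₀‖ < R) :
    Summable (fun n : ℕ =>
      hnorm (((iteratedDeriv n F₁ (xi1 a₁ b₁ x₀ y₀ z₀) / (Nat.factorial n : ℂ)) • e1 +
         (iteratedDeriv n F₂ (xi2 a₂ b₂ x₀ y₀ z₀) / (Nat.factorial n : ℂ)) • e2 +
         (iteratedDeriv n F₃ (xi2 a₂ b₂ x₀ y₀ z₀) / (Nat.factorial n : ℂ)) • e3 +
         (iteratedDeriv n F₄ (xi1 a₁ b₁ x₀ y₀ z₀) / (Nat.factorial n : ℂ)) • e4) *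
        (zeta a₁ a₂ b₁ b₂ x y z - zeta a₁ a₂ b₁ b₂ x₀ y₀ z₀) ^ n)) ∧
    SeriesTendsto (fun n : ℕ =>
      ((iteratedDeriv n F₁ (xi1 a₁ b₁ x₀ y₀ z₀) / (Nat.factorial n : ℂ)) • e1 +
         (iteratedDeriv n F₂ (xi2 a₂ b₂ x₀ y₀ z₀) / (Nat.factorial n : ℂ)) • e2 +
         (iteratedDeriv n F₃ (xi2 a₂ b₂ x₀ y₀ z₀) / (Nat.factorial n : ℂ)) • e3 +
         (iteratedDeriv n F₄ (xi1 a₁ b₁ x₀ y₀ z₀) / (Nat.factorial n : ℂ)) • e4) *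
        (zeta a₁ a₂ b₁ b₂ x y z - zeta a₁ a₂ b₁ b₂ x₀ y₀ z₀) ^ n)
      (F₁ (xi1 a₁ b₁ x y z) • e1 + F₂ (xi2 a₂ b₂ x y z) • e2 +
       F₃ (xi2 a₂ b₂ x y z) • e3 + F₄ (xi1 a₁ b₁ x y z) • e4) := by
  simp only [zeta_sub_zeta, combo_mul_pow]
  constructor
  · refine summable_hnorm_combo ?_ ?_ ?_ ?_ <;> simp only [norm_mul, norm_pow]
    exacts [summable_norm_taylor_on_ball hF₁ h₁, summable_norm_taylor_on_ball hF₂ h₂,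
      summable_norm_taylor_on_ball hF₃ h₂, summable_norm_taylor_on_ball hF₄ h₁]
  · exact seriesTendsto_combo (hasSum_taylor_on_ball hF₁ h₁) (hasSum_taylor_on_ball hF₂ h₂)
      (hasSum_taylor_on_ball hF₃ h₂) (hasSum_taylor_on_ball hF₄ h₁)

/-- Taylor expansion, left version: if F̂₁, F̂₄ are holomorphic on
U(ξ₁₀,R) and F̂₂, F̂₃ on U(ξ₂₀,R), and Φ̂(ζ) = F̂₁(ξ₁)e₁ + F̂₂(ξ₂)e₂ + F̂₃(ξ₂)e₃ + F̂₄(ξ₁)e₄,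
then for every ζ ∈ B(ζ₀,R) the series ∑ₙ p̂ₙ(ζ-ζ₀)ⁿ with p̂ₙ = âₙe₁ + b̂ₙe₂ + ĉₙe₃ + d̂ₙe₄,
âₙ = F̂₁⁽ⁿ⁾(ξ₁₀)/n!, b̂ₙ = F̂₂⁽ⁿ⁾(ξ₂₀)/n!, ĉₙ = F̂₃⁽ⁿ⁾(ξ₂₀)/n!, d̂ₙ = F̂₄⁽ⁿ⁾(ξ₁₀)/n!,
converges absolutely in the norm of ℍ(ℂ) and its sum is Φ̂(ζ). -/
theorem taylor_left (a₁ a₂ b₁ b₂ : ℂ) (x₀ y₀ z₀ : ℝ) (R : ℝ) (hR : 0 < R)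
    (F₁ F₂ F₃ F₄ : ℂ → ℂ)
    (hF₁ : DifferentiableOn ℂ F₁ (Metric.ball (xi1 a₁ b₁ x₀ y₀ z₀) R))
    (hF₄ : DifferentiableOn ℂ F₄ (Metric.ball (xi1 a₁ b₁ x₀ y₀ z₀) R))
    (hF₂ : DifferentiableOn ℂ F₂ (Metric.ball (xi2 a₂ b₂ x₀ y₀ z₀) R))
    (hF₃ : DifferentiableOn ℂ F₃ (Metric.ball (xi2 a₂ b₂ x₀ y₀ z₀) R))
    (x y z : ℝ)
    (h₁ : ‖xi1 a₁ b₁ x y z - xi1 a₁ b₁ x₀ y₀ z₀‖ < R)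
    (h₂ : ‖xi2 a₂ b₂ x y z - xi2 a₂ b₂ x₀ y₀ z₀‖ < R) :
    Summable (fun n : ℕ =>
      hnorm (((iteratedDeriv n F₁ (xi1 a₁ b₁ x₀ y₀ z₀) / (Nat.factorial n : ℂ)) • e1 +
         (iteratedDeriv n F₂ (xi2 a₂ b₂ x₀ y₀ z₀) / (Nat.factorial n : ℂ)) • e2 +
         (iteratedDeriv n F₃ (xi2 a₂ b₂ x₀ y₀ z₀) / (Nat.factorial n : ℂ)) • e3 +
         (iteratedDeriv n F₄ (xi1 a₁ b₁ x₀ y₀ z₀) / (Nat.factorial n : ℂ)) • e4) *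
        (zeta a₁ a₂ b₁ b₂ x y z - zeta a₁ a₂ b₁ b₂ x₀ y₀ z₀) ^ n)) ∧
    SeriesTendsto (fun n : ℕ =>
      ((iteratedDeriv n F₁ (xi1 a₁ b₁ x₀ y₀ z₀) / (Nat.factorial n : ℂ)) • e1 +
         (iteratedDeriv n F₂ (xi2 a₂ b₂ x₀ y₀ z₀) / (Nat.factorial n : ℂ)) • e2 +
         (iteratedDeriv n F₃ (xi2 a₂ b₂ x₀ y₀ z₀) / (Nat.factorial n : ℂ)) • e3 +
         (iteratedDeriv n F₄ (xi1 a₁ b₁ x₀ y₀ z₀) / (Nat.factorial n : ℂ)) • e4) *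
        (zeta a₁ a₂ b₁ b₂ x y z - zeta a₁ a₂ b₁ b₂ x₀ y₀ z₀) ^ n)
      (F₁ (xi1 a₁ b₁ x y z) • e1 + F₂ (xi2 a₂ b₂ x y z) • e2 +
       F₃ (xi2 a₂ b₂ x y z) • e3 + F₄ (xi1 a₁ b₁ x y z) • e4) :=
  taylor_left_general a₁ a₂ b₁ b₂ x₀ y₀ z₀ R F₁ F₂ F₃ F₄ hF₁ hF₄ hF₂ hF₃ x y z h₁ h₂
end
end
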